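/- The map F_IV(α,β): (x,y) ↦ (yP, xP) with P = 1 + (β−α)/(x−y) satisfies the Yang–Baxter relation on all triples where the relevant denominators are nonzero. -/

import Mathlib

open Function

variable {K : Type*} [Field K]

/-- lift a map on pairs to act on coordinates 1,2 of a triple -/
def lift12 {X : Type*} (f : X × X → X × X) : X × X × X → X × X × X :=
  fun p => ((f (p.1, p.2.1)).1, (f (p.1, p.2.1)).2, p.2.2)

/-- lift to coordinates 1,3 -/
def lift13 {X : Type*} (f : X × X → X × X) : X × X × X → X × X × X :=
  fun p => ((f (p.1, p.2.2)).1, p.2.1, (f (p.1, p.2.2)).2)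

/-- lift to coordinates 2,3 -/
def lift23 {X : Type*} (f : X × X → X × X) : X × X × X → X × X × X :=
  fun p => (p.1, (f (p.2.1, p.2.2)).1, (f (p.2.1, p.2.2)).2)

def FIVMap (a b : K) : K × K → K × K :=
  fun p => (p.2 * (1 + (b - a)/(p.1 - p.2)), p.1 * (1 + (b - a)/(p.1 - p.2)))

/-
`FIVMap a b` sends `(p, q)` to `(q, p)` scaled by the common factor `1 + (b - a) / (p - q)`.
Composites of such maps therefore send `(x, y, z)` to `(z, y, x)` scaled coordinatewise, and
the Yang–Baxter relation reduces to two identities `P₂ = Q₁ Q₃`, `P₁ P₃ = Q₂` between the six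
factors met along the two sides. Each factor is `(D + (b - a) E) / D` where `D / E` is its
denominator difference; with `B = (x - y)(y - z) + (a₂ - a₁) y` and
`C = (x - y)(y - z) - (a₃ - a₂) y` these differences are `B / (x - y)`, `C / (y - z)`,
`(x - y + a₂ - a₁) C / B` and `(y - z + a₃ - a₂) B / C`, and both identities come down to
`(a₂ - a₁) C + (a₃ - a₂) B = (a₃ - a₁)(x - y)(y - z)`.
-/

def scaledSwap {M : Type*} [Mul M] (φ : M → M → M) : M × M → M × M :=
  fun p => (p.2 * φ p.1 p.2, p.1 * φ p.1 p.2)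

theorem yangBaxter_scaledSwap {M : Type*} [CommSemigroup M] {φ ψ χ : M → M → M}
    {x y z P₁ P₂ P₃ Q₁ Q₂ Q₃ : M}
    (hP₁ : φ x y = P₁) (hP₂ : ψ (y * P₁) z = P₂) (hP₃ : χ (x * P₁) (y * P₁ * P₂) = P₃)
    (hQ₁ : χ y z = Q₁) (hQ₂ : ψ x (y * Q₁) = Q₂) (hQ₃ : φ (y * Q₁ * Q₂) (z * Q₁) = Q₃)
    (h₂ : P₂ = Q₁ * Q₃) (h₁₃ : P₁ * P₃ = Q₂) :
    lift23 (scaledSwap χ) (lift13 (scaledSwap ψ) (lift12 (scaledSwap φ) (x, y, z))) =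
      lift12 (scaledSwap φ) (lift13 (scaledSwap ψ) (lift23 (scaledSwap χ) (x, y, z))) := by
  simp only [lift12, lift13, lift23, scaledSwap, hP₁, hP₂, hP₃, hQ₁, hQ₂, hQ₃, Prod.mk.injEq]
  refine ⟨by rw [h₂, mul_assoc], ?_, by rw [mul_assoc, h₁₃]⟩
  calc y * P₁ * P₂ * P₃ = y * P₂ * (P₁ * P₃) := by ac_rfl
    _ = y * Q₁ * Q₂ * Q₃ := by rw [h₂, h₁₃]; ac_rfl

def fivFactor (a b p q : K) : K := 1 + (b - a) / (p - q)

theorem FIVMap_eq_scaledSwap (a b : K) : FIVMap a b = scaledSwap (fivFactor a b) := rfl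

theorem fivFactor_eq_div {a b p q D : K} (E : K) (hD : D ≠ 0) (h : p - q = D / E) :
    fivFactor a b p q = (D + (b - a) * E) / D := by
  rw [fivFactor, h]
  field_simp

theorem fivFactor_yangBaxter {a₁ a₂ a₃ x y z P₁ P₂ P₃ Q₁ Q₂ Q₃ : K}
    (hP₁ : fivFactor a₁ a₂ x y = P₁) (hP₂ : fivFactor a₁ a₃ (y * P₁) z = P₂)
    (hP₃ : fivFactor a₂ a₃ (x * P₁) (y * P₁ * P₂) = P₃)
    (hQ₁ : fivFactor a₂ a₃ y z = Q₁) (hQ₂ : fivFactor a₁ a₃ x (y * Q₁) = Q₂)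
    (hQ₃ : fivFactor a₁ a₂ (y * Q₁ * Q₂) (z * Q₁) = Q₃)
    (h₁ : x - y ≠ 0) (h₂ : y * P₁ - z ≠ 0) (h₃ : x * P₁ - y * P₁ * P₂ ≠ 0)
    (h₄ : y - z ≠ 0) (h₅ : x - y * Q₁ ≠ 0) (h₆ : y * Q₁ * Q₂ - z * Q₁ ≠ 0) :
    P₂ = Q₁ * Q₃ ∧ P₁ * P₃ = Q₂ := by
  obtain ⟨B, hB⟩ : ∃ B, B = (x - y) * (y - z) + (a₂ - a₁) * y := ⟨_, rfl⟩
  obtain ⟨C, hC⟩ : ∃ C, C = (x - y) * (y - z) - (a₃ - a₂) * y := ⟨_, rfl⟩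
  have key : (a₃ - a₁) * (x - y) * (y - z) = (a₂ - a₁) * C + (a₃ - a₂) * B := by
    rw [hB, hC]; ring
  have eP₁ : P₁ = (x - y + (a₂ - a₁)) / (x - y) := by
    rw [← hP₁, fivFactor_eq_div 1 h₁ (div_one _).symm, mul_one]
  have dP₂ : y * P₁ - z = B / (x - y) := by rw [eP₁, hB]; field_simp; ring
  have hB0 : B ≠ 0 := by rintro rfl; simp [dP₂] at h₂
  have eP₂ : P₂ = (B + (a₃ - a₁) * (x - y)) / B := by rw [← hP₂, fivFactor_eq_div _ hB0 dP₂]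
  have dP₃ : x * P₁ - y * P₁ * P₂ = (x - y + (a₂ - a₁)) * C / B := by
    rw [eP₁, eP₂, hC]; field_simp; rw [hB]; ring
  have hAC : (x - y + (a₂ - a₁)) * C ≠ 0 := by intro h; simp [dP₃, h] at h₃
  have eP₃ : P₃ = ((x - y + (a₂ - a₁)) * C + (a₃ - a₂) * B) / ((x - y + (a₂ - a₁)) * C) := by
    rw [← hP₃, fivFactor_eq_div _ hAC dP₃]
  have eQ₁ : Q₁ = (y - z + (a₃ - a₂)) / (y - z) := by
    rw [← hQ₁, fivFactor_eq_div 1 h₄ (div_one _).symm, mul_one]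
  have dQ₂ : x - y * Q₁ = C / (y - z) := by rw [eQ₁, hC]; field_simp; ring
  have hC0 : C ≠ 0 := by rintro rfl; simp [dQ₂] at h₅
  have eQ₂ : Q₂ = (C + (a₃ - a₁) * (y - z)) / C := by rw [← hQ₂, fivFactor_eq_div _ hC0 dQ₂]
  have dQ₃ : y * Q₁ * Q₂ - z * Q₁ = (y - z + (a₃ - a₂)) * B / C := by
    rw [eQ₁, eQ₂, hB]; field_simp; rw [hC]; ring
  have hA'B : (y - z + (a₃ - a₂)) * B ≠ 0 := by intro h; simp [dQ₃, h] at h₆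
  have eQ₃ : Q₃ = ((y - z + (a₃ - a₂)) * B + (a₂ - a₁) * C) / ((y - z + (a₃ - a₂)) * B) := by
    rw [← hQ₃, fivFactor_eq_div _ hA'B dQ₃]
  have hA : x - y + (a₂ - a₁) ≠ 0 := left_ne_zero_of_mul hAC
  have hA' : y - z + (a₃ - a₂) ≠ 0 := left_ne_zero_of_mul hA'B
  constructor
  · rw [eP₂, eQ₁, eQ₃]
    field_simp
    linear_combination key
  · rw [eP₁, eP₃, eQ₂]
    field_simp
    linear_combination -key

theorem yangBaxter_FIV (a1 a2 a3 x y z : K)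
    (h1 : (x - y) ≠ 0)
    (h2 : ((lift12 (FIVMap a1 a2) (x, y, z)).1 - (lift12 (FIVMap a1 a2) (x, y, z)).2.2) ≠ 0)
    (h3 : ((lift13 (FIVMap a1 a3) (lift12 (FIVMap a1 a2) (x, y, z))).2.1 - (lift13 (FIVMap a1 a3) (lift12 (FIVMap a1 a2) (x, y, z))).2.2) ≠ 0)
    (h4 : (y - z) ≠ 0)
    (h5 : ((lift23 (FIVMap a2 a3) (x, y, z)).1 - (lift23 (FIVMap a2 a3) (x, y, z)).2.2) ≠ 0)
    (h6 : ((lift13 (FIVMap a1 a3) (lift23 (FIVMap a2 a3) (x, y, z))).1 - (lift13 (FIVMap a1 a3) (lift23 (FIVMap a2 a3) (x, y, z))).2.1) ≠ 0) :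
    lift23 (FIVMap a2 a3) (lift13 (FIVMap a1 a3) (lift12 (FIVMap a1 a2) (x, y, z))) =
      lift12 (FIVMap a1 a2) (lift13 (FIVMap a1 a3) (lift23 (FIVMap a2 a3) (x, y, z))) := by
  obtain ⟨hP₂, hP₁₃⟩ := fivFactor_yangBaxter rfl rfl rfl rfl rfl rfl h1 h2 h3 h4 h5 h6
  simp only [FIVMap_eq_scaledSwap]
  exact yangBaxter_scaledSwap rfl rfl rfl rfl rfl rfl hP₂ hP₁₃
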